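/- Let R be a commutative noetherian ring, I, J, J' ideals of R, M a finitely generated R-module, and N an R-module. Then Γ_{I,J}(Γ_{I,J'}(M,N)) = Γ_{I,JJ'}(M,N) = Γ_{I,J∩J'}(M,N), where Γ_{I,J} applied to the submodule Γ_{I,J'}(M,N) of Hom_R(M,N) means its (I,J)-torsion submodule. -/

import Mathlib

open CategoryTheory

section GammaDefs

variable {R : Type} [CommRing R]

lemma gammaIJ_aux {M : Type} [AddCommGroup M] [Module R M] (I J : Ideal R) (x : M) (n : ℕ) :
    (∀ a ∈ I ^ n, ∃ j ∈ J, a • x = j • x) ↔ I ^ n ≤ Ideal.torsionOf R M x ⊔ J := by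
  constructor
  · intro h a ha
    obtain ⟨j, hj, hja⟩ := h a ha
    exact Submodule.mem_sup.2 ⟨a - j, by simp [Ideal.mem_torsionOf_iff, sub_smul, hja],
      j, hj, by ring⟩
  · intro h a ha
    obtain ⟨s, hs, j, hj, hsj⟩ := Submodule.mem_sup.1 (h ha)
    refine ⟨j, hj, ?_⟩
    rw [← hsj, add_smul, (Ideal.mem_torsionOf_iff _ _).1 hs, zero_add]

/-- The `(I,J)`-torsion submodule: elements `x` such that `I^n x ⊆ J x` for some `n > 0`. -/
def gammaIJ (I J : Ideal R) (M : Type) [AddCommGroup M] [Module R M] : Submodule R M where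
  carrier := {x | ∃ n : ℕ, 0 < n ∧ ∀ a ∈ I ^ n, ∃ j ∈ J, a • x = j • x}
  zero_mem' := ⟨1, one_pos, fun a _ => ⟨0, J.zero_mem, by simp⟩⟩
  add_mem' := by
    rintro x y ⟨n, hn, hx⟩ ⟨m, hm, hy⟩
    refine ⟨n + m, by omega, (gammaIJ_aux I J _ _).2 ?_⟩
    rw [pow_add]
    refine le_trans (Ideal.mul_mono ((gammaIJ_aux I J _ _).1 hx) ((gammaIJ_aux I J _ _).1 hy))
      (Ideal.mul_le.2 ?_)
    rintro a ha b hb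
    obtain ⟨s, hs, j, hj, rfl⟩ := Submodule.mem_sup.1 ha
    obtain ⟨t, ht, j', hj', rfl⟩ := Submodule.mem_sup.1 hb
    rw [Ideal.mem_torsionOf_iff] at hs ht
    refine Submodule.mem_sup.2 ⟨s * t, ?_, s * j' + j * t + j * j',
      J.add_mem (J.add_mem (J.mul_mem_left s hj') (J.mul_mem_right t hj)) (J.mul_mem_left j hj'),
      by ring⟩
    have h1 : (s * t) • x = 0 := by rw [mul_comm, mul_smul, hs, smul_zero]
    have h2 : (s * t) • y = 0 := by rw [mul_smul, ht, smul_zero]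
    rw [Ideal.mem_torsionOf_iff, smul_add, h1, h2, add_zero]
  smul_mem' := by
    rintro r x ⟨n, hn, hx⟩
    refine ⟨n, hn, fun a ha => ?_⟩
    obtain ⟨j, hj, hja⟩ := hx a ha
    exact ⟨j, hj, by rw [smul_comm, hja, smul_comm]⟩

/-- The `I`-torsion submodule: elements killed by a power of `I`. -/
def gammaI (I : Ideal R) (M : Type) [AddCommGroup M] [Module R M] : Submodule R M where
  carrier := {x | ∃ n : ℕ, 0 < n ∧ ∀ a ∈ I ^ n, a • x = 0}
  zero_mem' := ⟨1, one_pos, fun a _ => smul_zero a⟩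
  add_mem' := by
    rintro x y ⟨n, hn, hx⟩ ⟨m, hm, hy⟩
    refine ⟨n + m, by omega, fun a ha => ?_⟩
    rw [smul_add, hx a (Ideal.pow_le_pow_right (by omega) ha),
      hy a (Ideal.pow_le_pow_right (by omega) ha), add_zero]
  smul_mem' := by
    rintro r x ⟨n, hn, hx⟩
    exact ⟨n, hn, fun a ha => by rw [smul_comm, hx a ha, smul_zero]⟩

end GammaDefs


/-!
Writing `I ^ n x ⊆ J x` as `I ^ n ≤ ann x + J`, the product of the witnesses
`I ^ n ≤ ann x + J` and `I ^ m ≤ ann x + J'` gives `I ^ (n + m) ≤ ann x + J J'`, so that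
`Γ_{I,JJ'} = Γ_{I,J} ∩ Γ_{I,J'}`; monotonicity in `J` squeezes `Γ_{I,J ∩ J'}` between the two sides.
Membership in `Γ_{I,J}` of a submodule is membership in `Γ_{I,J}` of the ambient module, which
identifies the iterated torsion submodule with `Γ_{I,J} ∩ Γ_{I,J'}` as well.
-/

section GammaIJ

variable {R M : Type} [CommRing R] [AddCommGroup M] [Module R M]

theorem mem_gammaIJ_iff {I J : Ideal R} {x : M} :
    x ∈ gammaIJ I J M ↔ ∃ n : ℕ, 0 < n ∧ I ^ n ≤ Ideal.torsionOf R M x ⊔ J :=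
  exists_congr fun n => and_congr_right fun _ => gammaIJ_aux I J x n

theorem Ideal.sup_mul_sup_le_sup_mul (A J J' : Ideal R) : (A ⊔ J) * (A ⊔ J') ≤ A ⊔ J * J' := by
  rw [Ideal.sup_mul, Ideal.mul_sup J]
  exact sup_le (Ideal.mul_le_left.trans le_sup_left)
    (sup_le (Ideal.mul_le_right.trans le_sup_left) le_sup_right)

theorem gammaIJ_mono (I : Ideal R) {J J' : Ideal R} (h : J ≤ J') :
    gammaIJ I J M ≤ gammaIJ I J' M := by
  rintro x ⟨n, hn, hx⟩
  exact ⟨n, hn, fun a ha => (hx a ha).imp fun j hj => ⟨h hj.1, hj.2⟩⟩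

theorem gammaIJ_mul (I J J' : Ideal R) :
    gammaIJ I (J * J') M = gammaIJ I J M ⊓ gammaIJ I J' M := by
  refine le_antisymm (le_inf (gammaIJ_mono I Ideal.mul_le_left)
    (gammaIJ_mono I Ideal.mul_le_right)) ?_
  rintro x ⟨hJ, hJ'⟩
  obtain ⟨n, hn, hxn⟩ := mem_gammaIJ_iff.1 hJ
  obtain ⟨m, hm, hxm⟩ := mem_gammaIJ_iff.1 hJ'
  refine mem_gammaIJ_iff.2 ⟨n + m, by omega, ?_⟩
  calc I ^ (n + m) = I ^ n * I ^ m := pow_add I n m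
    _ ≤ (Ideal.torsionOf R M x ⊔ J) * (Ideal.torsionOf R M x ⊔ J') := Ideal.mul_mono hxn hxm
    _ ≤ Ideal.torsionOf R M x ⊔ J * J' := Ideal.sup_mul_sup_le_sup_mul _ _ _

theorem gammaIJ_inf (I J J' : Ideal R) :
    gammaIJ I (J ⊓ J') M = gammaIJ I J M ⊓ gammaIJ I J' M :=
  le_antisymm (le_inf (gammaIJ_mono I inf_le_left) (gammaIJ_mono I inf_le_right))
    ((gammaIJ_mul I J J').ge.trans (gammaIJ_mono I Ideal.mul_le_inf))

theorem gammaIJ_submodule_eq_comap (I J : Ideal R) (S : Submodule R M) :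
    gammaIJ I J S = (gammaIJ I J M).comap S.subtype := by
  ext y
  change (∃ n, 0 < n ∧ ∀ a ∈ I ^ n, ∃ j ∈ J, a • y = j • y) ↔
    ∃ n, 0 < n ∧ ∀ a ∈ I ^ n, ∃ j ∈ J, a • (y : M) = j • (y : M)
  simp only [Subtype.ext_iff, Submodule.coe_smul]

end GammaIJ

theorem gammaIJ_gammaIJ_mul_general (R : Type) [CommRing R]
    (I J J' : Ideal R) (M N : Type) [AddCommGroup M] [Module R M]
    [AddCommGroup N] [Module R N] :
    (gammaIJ I J ↥(gammaIJ I J' (M →ₗ[R] N))).map (gammaIJ I J' (M →ₗ[R] N)).subtype =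
        gammaIJ I (J * J') (M →ₗ[R] N) ∧
      gammaIJ I (J * J') (M →ₗ[R] N) = gammaIJ I (J ⊓ J') (M →ₗ[R] N) := by
  constructor
  · rw [gammaIJ_submodule_eq_comap, Submodule.map_comap_subtype, gammaIJ_mul, inf_comm]
  · rw [gammaIJ_mul, gammaIJ_inf]

/-- Proposition 2.4 (v):
`Γ_{I,J}(Γ_{I,J'}(M,N)) = Γ_{I,JJ'}(M,N) = Γ_{I,J ∩ J'}(M,N)`. -/
theorem gammaIJ_gammaIJ_mul (R : Type) [CommRing R] [IsNoetherianRing R]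
    (I J J' : Ideal R) (M N : Type) [AddCommGroup M] [Module R M] [Module.Finite R M]
    [AddCommGroup N] [Module R N] :
    (gammaIJ I J ↥(gammaIJ I J' (M →ₗ[R] N))).map (gammaIJ I J' (M →ₗ[R] N)).subtype =
        gammaIJ I (J * J') (M →ₗ[R] N) ∧
      gammaIJ I (J * J') (M →ₗ[R] N) = gammaIJ I (J ⊓ J') (M →ₗ[R] N) :=
  gammaIJ_gammaIJ_mul_general R I J J' M N
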